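/- Discrete entropy-sign inequality: let v ∈ C¹([0,ρ_max];[0,v_max]) with v' < 0, v(0) = v_max, v(ρ_max) = 0, let k ∈ [0,ρ_max], let R₀,…,R_{n−1} ∈ [0,ρ_max] and let φ₀,…,φₙ ≥ 0. Then k·[ Σ_{i=1}^{n−1} (sign(R_{i−1}−k) − sign(R_i−k))·(v(R_i)−v(k))·φ_i + (1 + sign(R₀−k))·(v(k)−v(R₀))·φ₀ + (1 + sign(R_{n−1}−k))·(v_max−v(k))·φₙ ] ≥ 0, where sign denotes the sign function with sign(0) = 0. -/

import Mathlib

open Set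

/-! Each term is nonnegative on its own. Since `v` is antitone, `v b - v k` has the sign of
`k - b`, hence of `-sign (b - k)`, so `(c - sign (b - k)) * (v b - v k) ≥ 0` whenever
`|c| ≤ 1`; the interior terms are this with `c = sign (R (i-1) - k)`, the left boundary term
with `c = -1`, and the right boundary term is a product of nonnegative factors because
`v k ≤ vmax`. -/

theorem Real.sign_mem_Icc (x : ℝ) : Real.sign x ∈ Icc (-1 : ℝ) 1 := by
  rcases Real.sign_apply_eq x with h | h | h <;> rw [h] <;> norm_num

theorem antitoneOn_of_hasDerivAt_nonpos {D : Set ℝ} (hD : Convex ℝ D) {f f' : ℝ → ℝ}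
    (hf : ∀ x ∈ D, HasDerivAt f (f' x) x) (hf' : ∀ x ∈ D, f' x ≤ 0) : AntitoneOn f D :=
  antitoneOn_of_hasDerivWithinAt_nonpos hD
    (fun x hx ↦ (hf x hx).continuousAt.continuousWithinAt)
    (fun x hx ↦ (hf x (interior_subset hx)).hasDerivWithinAt)
    (fun x hx ↦ hf' x (interior_subset hx))

theorem AntitoneOn.sub_sign_sub_mul_sub_nonneg {f : ℝ → ℝ} {s : Set ℝ} (hf : AntitoneOn f s)
    {b k c : ℝ} (hb : b ∈ s) (hk : k ∈ s) (hc : c ∈ Icc (-1 : ℝ) 1) :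
    0 ≤ (c - Real.sign (b - k)) * (f b - f k) := by
  rcases lt_trichotomy b k with hbk | rfl | hkb
  · rw [Real.sign_of_neg (sub_neg.2 hbk)]
    exact mul_nonneg (by linarith [hc.1]) (sub_nonneg.2 (hf hb hk hbk.le))
  · simp
  · rw [Real.sign_of_pos (sub_pos.2 hkb)]
    exact mul_nonneg_of_nonpos_of_nonpos (by linarith [hc.2]) (sub_nonpos.2 (hf hk hb hkb.le))

theorem stmt8_general
    (ρmax vmax : ℝ)
    (v v' : ℝ → ℝ)
    (hv_deriv : ∀ r ∈ Set.Icc (0:ℝ) ρmax, HasDerivAt v (v' r) r)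
    (hv'_neg : ∀ r ∈ Set.Icc (0:ℝ) ρmax, v' r < 0)
    (hv_range : ∀ r ∈ Set.Icc (0:ℝ) ρmax, v r ∈ Set.Icc (0:ℝ) vmax)
    (k : ℝ) (hk : k ∈ Set.Icc (0:ℝ) ρmax)
    (n : ℕ) (hn : 1 ≤ n)
    (R : ℕ → ℝ) (hR : ∀ i, i < n → R i ∈ Set.Icc (0:ℝ) ρmax)
    (φ : ℕ → ℝ) (hφ : ∀ i, i ≤ n → 0 ≤ φ i) :
    0 ≤ k * ((∑ i ∈ Finset.Icc 1 (n-1),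
        (Real.sign (R (i-1) - k) - Real.sign (R i - k)) * (v (R i) - v k) * φ i)
      + (1 + Real.sign (R 0 - k)) * (v k - v (R 0)) * φ 0
      + (1 + Real.sign (R (n-1) - k)) * (vmax - v k) * φ n) := by
  have hv : AntitoneOn v (Icc 0 ρmax) :=
    antitoneOn_of_hasDerivAt_nonpos (convex_Icc _ _) hv_deriv fun r hr ↦ (hv'_neg r hr).le
  refine mul_nonneg hk.1 (add_nonneg (add_nonneg ?_ ?_) ?_)
  · refine Finset.sum_nonneg fun i hi ↦ ?_
    obtain ⟨hi1, hin⟩ := Finset.mem_Icc.1 hi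
    exact mul_nonneg (hv.sub_sign_sub_mul_sub_nonneg (hR i (by omega)) hk
      (Real.sign_mem_Icc _)) (hφ i (by omega))
  · have hleft : (1 + Real.sign (R 0 - k)) * (v k - v (R 0))
        = (-1 - Real.sign (R 0 - k)) * (v (R 0) - v k) := by ring
    rw [hleft]
    exact mul_nonneg (hv.sub_sign_sub_mul_sub_nonneg (hR 0 hn) hk ⟨le_rfl, by norm_num⟩)
      (hφ 0 n.zero_le)
  · exact mul_nonneg (mul_nonneg (by linarith [(Real.sign_mem_Icc (R (n-1) - k)).1])
      (sub_nonneg.2 (hv_range k hk).2)) (hφ n le_rfl)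

/-- **Discrete entropy-sign inequality.**  Let `v ∈ C¹([0,ρmax];[0,vmax])` with `v' < 0`,
`v 0 = vmax`, `v ρmax = 0`, let `k ∈ [0,ρmax]`, let `R 0, …, R (n-1) ∈ [0,ρmax]` and let
`φ 0, …, φ n ≥ 0`.  Then the boundary terms arising in the discrete Kruzhkov entropy
computation for the follow-the-leader scheme are nonnegative. -/
theorem stmt8
    (ρmax vmax : ℝ) (hρmax : 0 < ρmax) (hvmaxpos : 0 < vmax)
    (v v' : ℝ → ℝ)
    (hv_deriv : ∀ r ∈ Set.Icc (0:ℝ) ρmax, HasDerivAt v (v' r) r)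
    (hv'_cont : ContinuousOn v' (Set.Icc (0:ℝ) ρmax))
    (hv'_neg : ∀ r ∈ Set.Icc (0:ℝ) ρmax, v' r < 0)
    (hv_range : ∀ r ∈ Set.Icc (0:ℝ) ρmax, v r ∈ Set.Icc (0:ℝ) vmax)
    (hv0 : v 0 = vmax) (hvρmax : v ρmax = 0)
    (k : ℝ) (hk : k ∈ Set.Icc (0:ℝ) ρmax)
    (n : ℕ) (hn : 1 ≤ n)
    (R : ℕ → ℝ) (hR : ∀ i, i < n → R i ∈ Set.Icc (0:ℝ) ρmax)
    (φ : ℕ → ℝ) (hφ : ∀ i, i ≤ n → 0 ≤ φ i) :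
    0 ≤ k * ((∑ i ∈ Finset.Icc 1 (n-1),
        (Real.sign (R (i-1) - k) - Real.sign (R i - k)) * (v (R i) - v k) * φ i)
      + (1 + Real.sign (R 0 - k)) * (v k - v (R 0)) * φ 0
      + (1 + Real.sign (R (n-1) - k)) * (vmax - v k) * φ n) :=
  stmt8_general ρmax vmax v v' hv_deriv hv'_neg hv_range k hk n hn R hR φ hφ
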